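/- Let f : ℝ × ℝ × ℝ × ℝ → ℝ, let δ ≠ 0 and σ ≠ 0 be real constants, and let u₀, v₀ ∈ ℝ. Let h* > 0 and suppose u* : ℝ → ℝ is three times differentiable, satisfies the extended equation with parameter h* for all x ≥ 0, satisfies the extended initial conditions u*(0) = h*^{1/σ} u₀ and u*'(0) = h*^{(1−δ)/σ} v₀, and satisfies u*'(x) → 0 as x → ∞ (the condition expressing, via λ = (u*'(∞) + h*^{(1−δ)/σ})^{1/(1−δ)} = h*^{1/σ}, that h* is a zero of the transformation function in the case v_∞ = 0). Then u(x) := h*^{−1/σ} · u*(h*^{δ/σ} x) solves the BVP: u'''(x) = f(x, u(x), u'(x), u''(x)) for all x ≥ 0, u(0) = u₀, u'(0) = v₀, and u'(x) → 0 as x → ∞. -/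
import Mathlib


open Real Filter Topology

/-- `u` is three times differentiable. -/
def ThreeDiff (u : ℝ → ℝ) : Prop :=
  Differentiable ℝ u ∧ Differentiable ℝ (deriv u) ∧ Differentiable ℝ (deriv (deriv u))

/-- The extended equation with parameter `h` (powers are real powers of the positive real `h`). -/
def ExtEq (f : ℝ × ℝ × ℝ × ℝ → ℝ) (δ σ h : ℝ) (u : ℝ → ℝ) : Prop :=
  ∀ x : ℝ, 0 ≤ x → deriv (deriv (deriv u)) x =
    h ^ ((1 - 3 * δ) / σ) *
      f (h ^ (-δ / σ) * x, h ^ (-1 / σ) * u x,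
         h ^ ((δ - 1) / σ) * deriv u x, h ^ ((2 * δ - 1) / σ) * deriv (deriv u) x)

/-- `u` solves the BVP (1.1) with asymptotic value `vinf`. -/
def SolvesBVP (f : ℝ × ℝ × ℝ × ℝ → ℝ) (u₀ v₀ vinf : ℝ) (u : ℝ → ℝ) : Prop :=
  ThreeDiff u ∧
  (∀ x : ℝ, 0 ≤ x → deriv (deriv (deriv u)) x = f (x, u x, deriv u x, deriv (deriv u) x)) ∧
  u 0 = u₀ ∧ deriv u 0 = v₀ ∧ Tendsto (deriv u) atTop (𝓝 vinf)

lemma diff_scale (g : ℝ → ℝ) (hg : Differentiable ℝ g) (a c : ℝ) :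
    Differentiable ℝ (fun x => a * g (c * x)) :=
  (hg.comp ((differentiable_id.const_mul c))).const_mul a

lemma deriv_scale (g : ℝ → ℝ) (hg : Differentiable ℝ g) (a c : ℝ) :
    deriv (fun x => a * g (c * x)) = fun x => (a * c) * deriv g (c * x) := by
  funext x
  have h1 : HasDerivAt (fun x : ℝ => g (c * x)) (deriv g (c * x) * (c * 1)) x :=
    (hg (c * x)).hasDerivAt.comp x ((hasDerivAt_id x).const_mul c)
  have h2 : HasDerivAt (fun x : ℝ => a * g (c * x)) (a * (deriv g (c * x) * (c * 1))) x :=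
    h1.const_mul a
  rw [h2.deriv]; ring

theorem stmt4 (f : ℝ × ℝ × ℝ × ℝ → ℝ) (δ σ : ℝ) (hδ : δ ≠ 0) (hσ : σ ≠ 0)
    (u₀ v₀ : ℝ) (hstar : ℝ) (hhstar : 0 < hstar)
    (ustar : ℝ → ℝ) (hthree : ThreeDiff ustar)
    (heq : ExtEq f δ σ hstar ustar)
    (hic1 : ustar 0 = hstar ^ (1 / σ) * u₀)
    (hic2 : deriv ustar 0 = hstar ^ ((1 - δ) / σ) * v₀)
    (hlim : Tendsto (deriv ustar) atTop (𝓝 0)) :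
    SolvesBVP f u₀ v₀ 0 (fun x => hstar ^ (-1 / σ) * ustar (hstar ^ (δ / σ) * x)) := by
  obtain ⟨hd1, hd2, hd3⟩ := hthree
  set a : ℝ := hstar ^ (-1 / σ) with ha
  set c : ℝ := hstar ^ (δ / σ) with hc
  have hcpos : 0 < c := Real.rpow_pos_of_pos hhstar _
  have hmul : ∀ p q : ℝ, hstar ^ p * hstar ^ q = hstar ^ (p + q) := fun p q =>
    (Real.rpow_add hhstar p q).symm
  have hD1 : deriv (fun x => a * ustar (c * x)) = fun x => (a * c) * deriv ustar (c * x) :=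
    deriv_scale ustar hd1 a c
  have hD2 : deriv (deriv (fun x => a * ustar (c * x)))
      = fun x => (a * c * c) * deriv (deriv ustar) (c * x) := by
    rw [hD1, deriv_scale (deriv ustar) hd2 (a * c) c]
  have hD3 : deriv (deriv (deriv (fun x => a * ustar (c * x))))
      = fun x => (a * c * c * c) * deriv (deriv (deriv ustar)) (c * x) := by
    rw [hD2, deriv_scale (deriv (deriv ustar)) hd3 (a * c * c) c]
  have hac : a * c = hstar ^ ((δ - 1) / σ) := by
    rw [ha, hc, hmul]; congr 1; ring
  have hac2 : a * c * c = hstar ^ ((2 * δ - 1) / σ) := by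
    rw [hac, hc, hmul]; congr 1; ring
  have hac3 : a * c * c * c = hstar ^ ((3 * δ - 1) / σ) := by
    rw [hac2, hc, hmul]; congr 1; ring
  refine ⟨⟨diff_scale ustar hd1 a c, ?_, ?_⟩, ?_, ?_, ?_, ?_⟩
  · rw [hD1]; exact diff_scale (deriv ustar) hd2 (a * c) c
  · rw [hD2]; exact diff_scale (deriv (deriv ustar)) hd3 (a * c * c) c
  · intro x hx
    have hcx : 0 ≤ c * x := mul_nonneg hcpos.le hx
    rw [hD3, hD1, deriv_scale (deriv ustar) hd2 (a * c) c]
    simp only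
    rw [heq (c * x) hcx]
    have e1 : hstar ^ (-δ / σ) * (c * x) = x := by
      rw [hc, ← mul_assoc, hmul]
      have : -δ / σ + δ / σ = 0 := by ring
      rw [this, Real.rpow_zero, one_mul]
    have e2 : a * c * c * c * hstar ^ ((1 - 3 * δ) / σ) = 1 := by
      rw [hac3, hmul]
      have : (3 * δ - 1) / σ + (1 - 3 * δ) / σ = 0 := by ring
      rw [this, Real.rpow_zero]
    rw [e1, ← hac, ← hac2, ← mul_assoc, e2, one_mul]
  · show a * ustar (c * 0) = u₀
    rw [mul_zero, hic1, ha, ← mul_assoc, hmul]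
    have : -1 / σ + 1 / σ = 0 := by ring
    rw [this, Real.rpow_zero, one_mul]
  · rw [hD1]
    show a * c * deriv ustar (c * 0) = v₀
    rw [mul_zero, hic2, hac, ← mul_assoc, hmul]
    have : (δ - 1) / σ + (1 - δ) / σ = 0 := by ring
    rw [this, Real.rpow_zero, one_mul]
  · rw [hD1]
    have htend : Tendsto (fun x : ℝ => c * x) atTop atTop :=
      tendsto_id.const_mul_atTop hcpos
    have := (hlim.comp htend).const_mul (a * c)
    simpa using this
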